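/- Let G be a finite graph with probability weights μ and let I be an independent set with a := μ(I), b := μ(N(I)), u := μ(V(G) \ (I ∪ N(I))) (so a + b + u = 1 and u < 1). Then lim_{n→∞} ᾱ(G^n) ≥ a/(a+b). -/

import Mathlib

/-!
Let `U` be the set of vertices outside `I ∪ N(I)`, so that no edge joins `I` to `I ∪ U`.
In `G^n`, the tuples whose first coordinate outside `U` lies in `I` form an independent set:
at the first index where one of two such tuples leaves `U`, one coordinate lies in `I` and the
other in `I ∪ U`. Splitting off the first coordinate, the product measure `mₙ` of this set
satisfies `mₙ₊₁ = a + u mₙ`, hence `mₙ = a (1 + u + ⋯ + uⁿ⁻¹) → a / (1 - u) = a / (a + b)`.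
-/

open Finset Filter

def IsIndepSet {V : Type*} (G : SimpleGraph V) (I : Finset V) : Prop :=
  ∀ u ∈ I, ∀ v ∈ I, ¬ G.Adj u v

noncomputable def nbhd {V : Type*} [Fintype V] (G : SimpleGraph V) (I : Finset V) : Finset V :=
  @Finset.filter _ (fun v => ∃ u ∈ I, G.Adj u v) (Classical.decPred _) Finset.univ

def fmeas {V : Type*} (μ : V → ℝ) (S : Finset V) : ℝ := ∑ v ∈ S, μ v

def tpow {V : Type*} (G : SimpleGraph V) (n : ℕ) : SimpleGraph (Fin n → V) where
  Adj u v := u ≠ v ∧ ∀ i, G.Adj (u i) (v i)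
  symm := ⟨fun u v h => ⟨h.1.symm, fun i => (h.2 i).symm⟩⟩
  loopless := ⟨fun u h => h.1 rfl⟩

noncomputable def pmeas {V : Type*} (μ : V → ℝ) (n : ℕ) (S : Finset (Fin n → V)) : ℝ :=
  ∑ x ∈ S, ∏ i, μ (x i)

noncomputable def alphaBar {V : Type*} (G : SimpleGraph V) (μ : V → ℝ) : ℝ :=
  sSup {x : ℝ | ∃ I : Finset V, IsIndepSet G I ∧ x = fmeas μ I}

noncomputable def alphaPow {V : Type*} (G : SimpleGraph V) (μ : V → ℝ) (n : ℕ) : ℝ :=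
  alphaBar (tpow G n) (fun x => ∏ i, μ (x i))

section Measures

variable {V : Type*} (μ : V → ℝ)

lemma fmeas_nonneg (hμ0 : ∀ v, 0 ≤ μ v) (S : Finset V) : 0 ≤ fmeas μ S :=
  sum_nonneg fun v _ => hμ0 v

lemma pmeas_univ [Fintype V] (n : ℕ) : pmeas μ n univ = (∑ v, μ v) ^ n := by
  rw [pmeas, ← Fintype.piFinset_univ, ← prod_univ_sum, prod_const, card_fin]

end Measures

section IndependentSets

variable {V : Type*} [Fintype V] {G : SimpleGraph V}

lemma mem_nbhd {I : Finset V} {v : V} : v ∈ nbhd G I ↔ ∃ u ∈ I, G.Adj u v := by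
  simp only [nbhd, mem_filter, mem_univ, true_and]

lemma IsIndepSet.disjoint_nbhd {I : Finset V} (hI : IsIndepSet G I) : Disjoint I (nbhd G I) :=
  disjoint_left.2 fun v hv hv' =>
    let ⟨w, hw, hwv⟩ := mem_nbhd.1 hv'
    hI w hw v hv hwv

lemma not_adj_of_mem_compl_union_nbhd [DecidableEq V] {I : Finset V} {x y : V} (hx : x ∈ I)
    (hy : y ∈ univ \ (I ∪ nbhd G I)) : ¬ G.Adj x y := fun hxy =>
  (mem_sdiff.1 hy).2 (mem_union_right _ (mem_nbhd.2 ⟨x, hx, hxy⟩))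

lemma fmeas_compl_union_nbhd [DecidableEq V] (μ : V → ℝ) {I : Finset V} (hI : IsIndepSet G I) :
    fmeas μ (univ \ (I ∪ nbhd G I)) = ∑ v, μ v - (fmeas μ I + fmeas μ (nbhd G I)) := by
  rw [fmeas, fmeas, fmeas, sum_sdiff_eq_sub (subset_univ _),
    sum_union hI.disjoint_nbhd]

lemma fmeas_le_alphaBar {μ : V → ℝ} (hμ0 : ∀ v, 0 ≤ μ v) {S : Finset V} (hS : IsIndepSet G S) :
    fmeas μ S ≤ alphaBar G μ := by
  refine le_csSup ⟨fmeas μ univ, ?_⟩ ⟨S, hS, rfl⟩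
  rintro _ ⟨T, -, rfl⟩
  exact sum_le_sum_of_subset_of_nonneg (subset_univ T) fun v _ _ => hμ0 v

lemma pmeas_le_alphaPow {μ : V → ℝ} (hμ0 : ∀ v, 0 ≤ μ v) {n : ℕ} {S : Finset (Fin n → V)}
    (hS : IsIndepSet (tpow G n) S) : pmeas μ n S ≤ alphaPow G μ n :=
  fmeas_le_alphaBar (fun x => prod_nonneg fun i _ => hμ0 (x i)) hS

end IndependentSets

section UntilSet

variable {V : Type*} [Fintype V] [DecidableEq V]

/-- The tuples `(u₀, …, u_{k-1}, i, *, …, *)` of length `n` with `k < n`, `uⱼ ∈ U` and `i ∈ I`. -/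
def untilSet (I U : Finset V) : (n : ℕ) → Finset (Fin n → V)
  | 0 => ∅
  | n + 1 => (I ×ˢ univ ∪ U ×ˢ untilSet I U n).map (Fin.consEquiv fun _ => V).toEmbedding

variable {I U : Finset V}

lemma mem_untilSet_succ {n : ℕ} {x : Fin (n + 1) → V} :
    x ∈ untilSet I U (n + 1) ↔ x 0 ∈ I ∨ x 0 ∈ U ∧ Fin.tail x ∈ untilSet I U n := by
  rw [untilSet, mem_map_equiv]
  simp

lemma exists_not_adj_of_mem_untilSet {G : SimpleGraph V} (hI : IsIndepSet G I)
    (hIU : ∀ x ∈ I, ∀ y ∈ U, ¬ G.Adj x y) {n : ℕ} {x y : Fin n → V}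
    (hx : x ∈ untilSet I U n) (hy : y ∈ untilSet I U n) : ∃ i, ¬ G.Adj (x i) (y i) := by
  induction n with
  | zero => exact absurd hx (notMem_empty _)
  | succ n ih =>
    rw [mem_untilSet_succ] at hx hy
    rcases hx with hx | ⟨hxU, hxt⟩ <;> rcases hy with hy | ⟨hyU, hyt⟩
    · exact ⟨0, hI _ hx _ hy⟩
    · exact ⟨0, hIU _ hx _ hyU⟩
    · exact ⟨0, fun h => hIU _ hy _ hxU h.symm⟩
    · obtain ⟨i, hi⟩ := ih hxt hyt
      exact ⟨i.succ, hi⟩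

lemma isIndepSet_untilSet {G : SimpleGraph V} (hI : IsIndepSet G I)
    (hIU : ∀ x ∈ I, ∀ y ∈ U, ¬ G.Adj x y) (n : ℕ) : IsIndepSet (tpow G n) (untilSet I U n) :=
  fun _ hx _ hy hxy =>
    let ⟨i, hi⟩ := exists_not_adj_of_mem_untilSet hI hIU hx hy
    hi (hxy.2 i)

lemma pmeas_untilSet_succ (μ : V → ℝ) (hIU : Disjoint I U) (n : ℕ) :
    pmeas μ (n + 1) (untilSet I U (n + 1)) =
      fmeas μ I * (∑ v, μ v) ^ n + fmeas μ U * pmeas μ n (untilSet I U n) := by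
  have hdisj : Disjoint (I ×ˢ (univ : Finset (Fin n → V))) (U ×ˢ untilSet I U n) :=
    disjoint_product.2 (Or.inl hIU)
  rw [untilSet, pmeas, sum_map, sum_union hdisj, sum_product,
    sum_product, ← pmeas_univ, pmeas, pmeas, fmeas, fmeas, sum_mul, sum_mul]
  simp [Fin.prod_univ_succ, mul_sum]

lemma pmeas_untilSet {μ : V → ℝ} (hμ1 : ∑ v, μ v = 1) (hIU : Disjoint I U) (n : ℕ) :
    pmeas μ n (untilSet I U n) = fmeas μ I * ∑ k ∈ range n, fmeas μ U ^ k := by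
  induction n with
  | zero => simp [untilSet, pmeas]
  | succ n ih => rw [pmeas_untilSet_succ μ hIU, ih, hμ1, geom_sum_succ]; ring

end UntilSet

lemma div_one_sub_le_of_tendsto {a u L : ℝ} {m : ℕ → ℝ} (ha : 0 ≤ a) (hu : 0 ≤ u)
    (hm : ∀ n, a * ∑ k ∈ range n, u ^ k ≤ m n) (hL : Tendsto m atTop (nhds L)) :
    a / (1 - u) ≤ L := by
  rcases lt_or_ge u 1 with hu1 | hu1
  · rw [div_eq_mul_inv]
    exact le_of_tendsto_of_tendsto'
      ((hasSum_geometric_of_lt_one hu hu1).tendsto_sum_nat.const_mul a) hL hm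
  · have hm0 : ∀ n, 0 ≤ m n := fun n =>
      (mul_nonneg ha (sum_nonneg fun k _ => pow_nonneg hu k)).trans (hm n)
    exact (div_nonpos_of_nonneg_of_nonpos ha (by linarith)).trans (ge_of_tendsto' hL hm0)

theorem stmt_16 {V : Type*} [Fintype V] (G : SimpleGraph V) (μ : V → ℝ)
    (hμ0 : ∀ v, 0 ≤ μ v) (hμ1 : ∑ v, μ v = 1)
    (I : Finset V) (hI : IsIndepSet G I)
    (L : ℝ) (hL : Tendsto (fun n => alphaPow G μ n) atTop (nhds L)) :
    fmeas μ I / (fmeas μ I + fmeas μ (nbhd G I)) ≤ L := by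
  classical
  set U := univ \ (I ∪ nbhd G I) with hU
  have hIU : ∀ x ∈ I, ∀ y ∈ U, ¬ G.Adj x y := fun _ hx _ hy =>
    not_adj_of_mem_compl_union_nbhd hx hy
  have hdisj : Disjoint I U := disjoint_left.2 fun _ hv hvU =>
    (mem_sdiff.1 hvU).2 (mem_union_left _ hv)
  have h1u : 1 - fmeas μ U = fmeas μ I + fmeas μ (nbhd G I) := by
    rw [hU, fmeas_compl_union_nbhd μ hI, hμ1]; ring
  rw [← h1u]
  refine div_one_sub_le_of_tendsto (fmeas_nonneg μ hμ0 I) (fmeas_nonneg μ hμ0 U)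
    (fun n => ?_) hL
  rw [← pmeas_untilSet hμ1 hdisj n]
  exact pmeas_le_alphaPow hμ0 (isIndepSet_untilSet hI hIU n)
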